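/- Polyhedral partition of the belief space into structured partial-policy regions. Suppose the unique bounded fixed point v* of H is piecewise linear in the belief: for each s ∈ S there is a finite nonempty set Γ(s) of vectors γ : M → ℝ such that v*(s, b) = min_{γ ∈ Γ(s)} Σ_μ b μ * γ μ for all b ∈ B. Then there exist n ∈ ℕ, subsets B₁, …, Bₙ of B whose union is B, each B_j being the intersection of B with finitely many closed halfspaces of the form {b : M → ℝ | Σ_μ b μ * w μ ≤ d} (with w : M → ℝ and d ∈ ℝ), and functions δ₁, …, δₙ : S → A with δ_j s ∈ 𝒜 s for all s, such that for every j, every b ∈ B_j, and every s ∈ S, δ_j s attains the minimum in the Bellman operator at (s, b): v*(s, b) = Σ_{y'} σ(y' | b) * h_{y'}(s, δ_j s, v*(·, λ(y', b))). -/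

import Mathlib

open Finset

/-- The belief simplex over the modulation space `M`. -/
abbrev Belief (M : Type) [Fintype M] : Type :=
  {b : M → ℝ // (∀ μ, 0 ≤ b μ) ∧ ∑ μ, b μ = 1}

/-- A finite SEP-POMDP: feasible action sets, cost function, state transition
probabilities, modulation/observation probabilities, and a discount factor. -/
structure SEP (S Y M A : Type) [Fintype S] [Fintype Y] [Fintype M] [Fintype A] where
  act : S → Finset A
  act_ne : ∀ s, (act s).Nonempty
  c : S → Y → A → ℝ
  p : Y → S → A → S → ℝ
  p_nonneg : ∀ y' s a s', 0 ≤ p y' s a s'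
  p_sum : ∀ y' s a, ∑ s', p y' s a s' = 1
  Q : M → Y → M → ℝ
  Q_nonneg : ∀ μ y' μ', 0 ≤ Q μ y' μ'
  Q_sum : ∀ μ, ∑ y', ∑ μ', Q μ y' μ' = 1
  β : ℝ
  β_nonneg : 0 ≤ β
  β_lt_one : β < 1

namespace SEP

variable {S Y M A : Type} [Fintype S] [Fintype Y] [Fintype M] [Fintype A]

/-- `σ(y' | b) = ∑ μ, ∑ μ', b μ * Q μ y' μ'`. -/
def sig (P : SEP S Y M A) (b : Belief M) (y' : Y) : ℝ :=
  ∑ μ, ∑ μ', b.1 μ * P.Q μ y' μ'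

/-- The Bayesian belief update `λ(y', b)`. -/
noncomputable def lam (P : SEP S Y M A) (y' : Y) (b : Belief M) : Belief M :=
  if h : 0 < P.sig b y' then
    ⟨fun μ' => (∑ μ, b.1 μ * P.Q μ y' μ') / P.sig b y',
      fun μ' => div_nonneg (Finset.sum_nonneg fun μ _ =>
        mul_nonneg (b.2.1 μ) (P.Q_nonneg μ y' μ')) h.le,
      by
        rw [← Finset.sum_div, Finset.sum_comm]
        exact div_self (ne_of_gt h)⟩
  else b

/-- `h_{y'}(s, a, v̄) = c s y' a + β * ∑ s', p y' s a s' * v̄ s'`. -/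
def hy (P : SEP S Y M A) (y' : Y) (s : S) (a : A) (vb : S → ℝ) : ℝ :=
  P.c s y' a + P.β * ∑ s', P.p y' s a s' * vb s'

/-- The Bellman operator `H` of the SEP-POMDP. -/
noncomputable def H (P : SEP S Y M A) (v : S → Belief M → ℝ) (s : S) (b : Belief M) : ℝ :=
  (P.act s).inf' (P.act_ne s) fun a =>
    ∑ y', P.sig b y' * P.hy y' s a fun s' => v s' (P.lam y' b)

/-- Boundedness of a function `v : S × B → ℝ`. -/
def Bdd (v : S → Belief M → ℝ) : Prop :=
  ∃ C, ∀ s b, |v s b| ≤ C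

end SEP

/-!
Since `σ(y' | b) • λ(y', b) = b ᵥ* Q_{y'}` is the unnormalized posterior, piecewise linearity of
`v*` makes `σ(y' | b) * v*(s', λ(y', b)) = min_{γ ∈ Γ(s')} b ⬝ᵥ (Q_{y'} *ᵥ γ)` a minimum of
linear forms in `b`. On the polyhedron where a selection `g(y', s') ∈ Γ(s')` attains all these
minima, every Bellman Q-value is a linear form `b ⬝ᵥ qCoef g s a`; intersecting with the
polyhedron where `δ s` minimizes these forms gives a region on which `δ` is optimal. Every belief
has an optimal selection and an optimal policy, so the finitely many regions cover the simplex.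
-/

open Matrix

def IsPolyhedron {M : Type} [Fintype M] (B : Set (Belief M)) : Prop :=
  ∃ (k : ℕ) (w : Fin k → M → ℝ) (d : Fin k → ℝ), B = {b | ∀ i, b.1 ⬝ᵥ w i ≤ d i}

section IsPolyhedron

variable {M : Type} [Fintype M]

theorem isPolyhedron_setOf_forall {ι : Type*} [Finite ι] (w : ι → M → ℝ) (d : ι → ℝ) :
    IsPolyhedron {b : Belief M | ∀ i, b.1 ⬝ᵥ w i ≤ d i} := by
  obtain ⟨k, ⟨e⟩⟩ := Finite.exists_equiv_fin ι
  refine ⟨k, w ∘ e.symm, d ∘ e.symm, ?_⟩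
  ext b
  exact e.symm.forall_congr_right.symm

theorem IsPolyhedron.inter {B C : Set (Belief M)} (hB : IsPolyhedron B) (hC : IsPolyhedron C) :
    IsPolyhedron (B ∩ C) := by
  obtain ⟨k, w, d, rfl⟩ := hB
  obtain ⟨l, w', d', rfl⟩ := hC
  convert isPolyhedron_setOf_forall (Sum.elim w w') (Sum.elim d d') using 1
  ext b
  simp only [Set.mem_inter_iff, Set.mem_ofPred_eq, Sum.forall, Sum.elim_inl, Sum.elim_inr]

theorem isPolyhedron_setOf_forall_forall_mem {ι κ : Type*} [Finite ι] (t : ι → Finset κ)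
    (u : ι → M → ℝ) (v : ι → κ → M → ℝ) :
    IsPolyhedron {b : Belief M | ∀ i, ∀ x ∈ t i, b.1 ⬝ᵥ u i ≤ b.1 ⬝ᵥ v i x} := by
  convert isPolyhedron_setOf_forall (ι := (i : ι) × t i)
    (fun p => u p.1 - v p.1 p.2) (fun _ => 0) using 1
  ext b
  simp only [Set.mem_ofPred_eq, dotProduct_sub, sub_nonpos, Sigma.forall, Subtype.forall]

end IsPolyhedron

namespace SEP

variable {S Y M A : Type} [Fintype S] [Fintype Y] [Fintype M] [Fintype A] (P : SEP S Y M A)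

def obsMatrix (y' : Y) : Matrix M M ℝ :=
  Matrix.of fun μ μ' => P.Q μ y' μ'

noncomputable def qValue (v : S → Belief M → ℝ) (s : S) (a : A) (b : Belief M) : ℝ :=
  ∑ y', P.sig b y' * P.hy y' s a fun s' => v s' (P.lam y' b)

theorem H_eq_inf'_qValue (v : S → Belief M → ℝ) (s : S) (b : Belief M) :
    P.H v s b = (P.act s).inf' (P.act_ne s) fun a => P.qValue v s a b :=
  rfl

theorem vecMul_obsMatrix_nonneg (b : Belief M) (y' : Y) (μ' : M) :
    0 ≤ (b.1 ᵥ* P.obsMatrix y') μ' :=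
  Finset.sum_nonneg fun μ _ => mul_nonneg (b.2.1 μ) (P.Q_nonneg μ y' μ')

theorem sig_eq_sum_vecMul (b : Belief M) (y' : Y) :
    P.sig b y' = ∑ μ', (b.1 ᵥ* P.obsMatrix y') μ' :=
  Finset.sum_comm

theorem sig_nonneg (b : Belief M) (y' : Y) : 0 ≤ P.sig b y' :=
  P.sig_eq_sum_vecMul b y' ▸ Finset.sum_nonneg fun μ' _ => P.vecMul_obsMatrix_nonneg b y' μ'

theorem sig_smul_lam (b : Belief M) (y' : Y) :
    P.sig b y' • (P.lam y' b).1 = b.1 ᵥ* P.obsMatrix y' := by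
  by_cases hσ : 0 < P.sig b y'
  · ext μ'
    simp only [lam, dif_pos hσ, Pi.smul_apply, smul_eq_mul]
    exact mul_div_cancel₀ _ hσ.ne'
  · -- `λ` falls back to `b` here, but then the unnormalized posterior vanishes too
    have hσ0 : P.sig b y' = 0 := le_antisymm (not_lt.1 hσ) (P.sig_nonneg b y')
    have hzero := (Finset.sum_eq_zero_iff_of_nonneg fun μ' _ =>
      P.vecMul_obsMatrix_nonneg b y' μ').1 (P.sig_eq_sum_vecMul b y' ▸ hσ0)
    ext μ'
    simp [hσ0, hzero]

theorem sig_mul_dotProduct_lam (b : Belief M) (y' : Y) (γ : M → ℝ) :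
    P.sig b y' * ((P.lam y' b).1 ⬝ᵥ γ) = b.1 ⬝ᵥ (P.obsMatrix y' *ᵥ γ) := by
  rw [dotProduct_mulVec, ← P.sig_smul_lam, smul_dotProduct, smul_eq_mul]

theorem sig_mul_apply_lam_eq {v : Belief M → ℝ} {Γ : Finset (M → ℝ)} (hΓ : Γ.Nonempty)
    (hv : ∀ b, v b = Γ.inf' hΓ fun γ => b.1 ⬝ᵥ γ) {b : Belief M} {y' : Y} {g : M → ℝ}
    (hg : g ∈ Γ) (hmin : ∀ γ ∈ Γ, b.1 ⬝ᵥ (P.obsMatrix y' *ᵥ g) ≤ b.1 ⬝ᵥ (P.obsMatrix y' *ᵥ γ)) :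
    P.sig b y' * v (P.lam y' b) = b.1 ⬝ᵥ (P.obsMatrix y' *ᵥ g) := by
  obtain ⟨γ₀, hγ₀, hinf⟩ := Γ.exists_mem_eq_inf' hΓ fun γ => (P.lam y' b).1 ⬝ᵥ γ
  rw [hv, hinf, P.sig_mul_dotProduct_lam]
  refine le_antisymm ?_ (hmin γ₀ hγ₀)
  rw [← P.sig_mul_dotProduct_lam, ← P.sig_mul_dotProduct_lam, ← hinf]
  exact mul_le_mul_of_nonneg_left (Γ.inf'_le _ hg) (P.sig_nonneg b y')

theorem sig_mul_hy_eq {b : Belief M} {y' : Y} {vb : S → ℝ} {g : S → M → ℝ}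
    (hv : ∀ s', P.sig b y' * vb s' = b.1 ⬝ᵥ (P.obsMatrix y' *ᵥ g s')) (s : S) (a : A) :
    P.sig b y' * P.hy y' s a vb
      = b.1 ⬝ᵥ (P.obsMatrix y' *ᵥ fun μ' => P.hy y' s a fun s' => g s' μ') := by
  have hvec : (fun μ' => P.hy y' s a fun s' => g s' μ')
      = P.c s y' a • (1 : M → ℝ) + P.β • ∑ s', P.p y' s a s' • g s' := by
    ext μ'
    simp [hy, Finset.sum_apply]
  rw [hvec, mulVec_add, mulVec_smul, mulVec_smul, mulVec_sum, dotProduct_add, dotProduct_smul,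
    dotProduct_smul, dotProduct_sum]
  simp only [mulVec_smul, dotProduct_smul, ← hv]
  rw [dotProduct_mulVec, dotProduct_one, ← sig_eq_sum_vecMul, hy]
  simp only [smul_eq_mul, mul_add, Finset.mul_sum]
  ring_nf

def qCoef (g : Y × S → M → ℝ) (s : S) (a : A) : M → ℝ :=
  ∑ y', P.obsMatrix y' *ᵥ fun μ' => P.hy y' s a fun s' => g (y', s') μ'

theorem qValue_eq_dotProduct_qCoef {v : S → Belief M → ℝ} {b : Belief M} {g : Y × S → M → ℝ}
    (hv : ∀ y' s', P.sig b y' * v s' (P.lam y' b) = b.1 ⬝ᵥ (P.obsMatrix y' *ᵥ g (y', s')))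
    (s : S) (a : A) :
    P.qValue v s a b = b.1 ⬝ᵥ P.qCoef g s a := by
  rw [qCoef, dotProduct_sum]
  exact Finset.sum_congr rfl fun y' _ => P.sig_mul_hy_eq (hv y') s a

def optimalRegion (Γ : S → Finset (M → ℝ)) (g : Y × S → M → ℝ) (δ : S → A) :
    Set (Belief M) :=
  {b | ∀ ys : Y × S, ∀ γ ∈ Γ ys.2,
      b.1 ⬝ᵥ (P.obsMatrix ys.1 *ᵥ g ys) ≤ b.1 ⬝ᵥ (P.obsMatrix ys.1 *ᵥ γ)} ∩
    {b | ∀ s, ∀ a ∈ P.act s, b.1 ⬝ᵥ P.qCoef g s (δ s) ≤ b.1 ⬝ᵥ P.qCoef g s a}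

theorem isPolyhedron_optimalRegion (Γ : S → Finset (M → ℝ)) (g : Y × S → M → ℝ) (δ : S → A) :
    IsPolyhedron (P.optimalRegion Γ g δ) :=
  (isPolyhedron_setOf_forall_forall_mem _ _ _).inter
    (isPolyhedron_setOf_forall_forall_mem _ _ _)

theorem exists_mem_optimalRegion {Γ : S → Finset (M → ℝ)} (hΓ : ∀ s, (Γ s).Nonempty)
    (b : Belief M) :
    ∃ (g : (ys : Y × S) → Γ ys.2) (δ : (s : S) → P.act s),
      b ∈ P.optimalRegion Γ (fun ys => g ys) (fun s => δ s) := by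
  choose g hg hgmin using fun ys : Y × S =>
    (Γ ys.2).exists_min_image (fun γ => b.1 ⬝ᵥ (P.obsMatrix ys.1 *ᵥ γ)) (hΓ ys.2)
  choose δ hδ hδmin using fun s =>
    (P.act s).exists_min_image (fun a => b.1 ⬝ᵥ P.qCoef g s a) (P.act_ne s)
  exact ⟨fun ys => ⟨g ys, hg ys⟩, fun s => ⟨δ s, hδ s⟩, hgmin, hδmin⟩

theorem H_eq_qValue_of_mem_optimalRegion {v : S → Belief M → ℝ} {Γ : S → Finset (M → ℝ)}
    (hΓ : ∀ s, (Γ s).Nonempty) (hv : ∀ s b, v s b = (Γ s).inf' (hΓ s) fun γ => b.1 ⬝ᵥ γ)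
    {g : Y × S → M → ℝ} (hg : ∀ ys, g ys ∈ Γ ys.2) {δ : S → A} (hδ : ∀ s, δ s ∈ P.act s)
    {b : Belief M} (hb : b ∈ P.optimalRegion Γ g δ) (s : S) :
    P.H v s b = P.qValue v s (δ s) b := by
  have hlin : ∀ a, P.qValue v s a b = b.1 ⬝ᵥ P.qCoef g s a :=
    P.qValue_eq_dotProduct_qCoef (fun y' s' =>
      P.sig_mul_apply_lam_eq (hΓ s') (hv s') (hg (y', s')) (hb.1 (y', s'))) s
  rw [H_eq_inf'_qValue]
  refine le_antisymm ((P.act s).inf'_le _ (hδ s)) ((P.act s).le_inf' _ _ fun a ha => ?_)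
  rw [hlin, hlin]
  exact hb.2 s a ha

end SEP

theorem belief_space_partition_general {S Y M A : Type} [Fintype S] [Fintype Y] [Fintype M] [Fintype A]
    (P : SEP S Y M A)
    -- the unique bounded fixed point of H
    (vstar : S → Belief M → ℝ)
    (hfix : ∀ s b, vstar s b = P.H vstar s b)
    -- piecewise linearity of vstar in the belief
    (Γ : S → Finset (M → ℝ)) (hΓ : ∀ s, (Γ s).Nonempty)
    (hpl : ∀ s (b : Belief M),
      vstar s b = (Γ s).inf' (hΓ s) fun γ => ∑ μ, b.1 μ * γ μ) :
    ∃ (n : ℕ) (Bs : Fin n → Set (Belief M)) (δ : Fin n → S → A),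
      (∀ b : Belief M, ∃ j, b ∈ Bs j) ∧
      (∀ j, ∃ (k : ℕ) (w : Fin k → M → ℝ) (d : Fin k → ℝ),
        Bs j = {b : Belief M | ∀ i, ∑ μ, b.1 μ * w i μ ≤ d i}) ∧
      (∀ j s, δ j s ∈ P.act s) ∧
      (∀ j, ∀ b ∈ Bs j, ∀ s,
        vstar s b = ∑ y', P.sig b y' * P.hy y' s (δ j s) fun s' => vstar s' (P.lam y' b)) := by
  obtain ⟨n, ⟨e⟩⟩ :=
    Finite.exists_equiv_fin (((ys : Y × S) → Γ ys.2) × ((s : S) → P.act s))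
  let g : Fin n → Y × S → M → ℝ := fun j ys => (e.symm j).1 ys
  let δ : Fin n → S → A := fun j s => (e.symm j).2 s
  refine ⟨n, fun j => P.optimalRegion Γ (g j) (δ j), δ, fun b => ?_,
    fun j => P.isPolyhedron_optimalRegion Γ (g j) (δ j), fun j s => ((e.symm j).2 s).2,
    fun j b hb s => ?_⟩
  · obtain ⟨g₀, δ₀, hb⟩ := P.exists_mem_optimalRegion hΓ b
    exact ⟨e (g₀, δ₀), by simpa [g, δ] using hb⟩
  · rw [hfix, P.H_eq_qValue_of_mem_optimalRegion hΓ hpl (fun ys => ((e.symm j).1 ys).2)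
      (fun s => ((e.symm j).2 s).2) hb]
    rfl

/-- **Polyhedral partition of the belief space into structured partial-policy
regions.** If the value function `vstar` is piecewise linear in the belief,
then the belief space partitions into finitely many regions, each the
intersection of the simplex with finitely many closed halfspaces, on each of
which a single partial policy `δ_j : S → A` attains the Bellman minimum. -/
theorem belief_space_partition {S Y M A : Type} [Fintype S] [Fintype Y] [Fintype M] [Fintype A]
    [Nonempty S] [Nonempty Y] [Nonempty M] [Nonempty A]
    (P : SEP S Y M A)
    -- the unique bounded fixed point of H
    (vstar : S → Belief M → ℝ) (hbdd : SEP.Bdd vstar)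
    (hfix : ∀ s b, vstar s b = P.H vstar s b)
    -- piecewise linearity of vstar in the belief
    (Γ : S → Finset (M → ℝ)) (hΓ : ∀ s, (Γ s).Nonempty)
    (hpl : ∀ s (b : Belief M),
      vstar s b = (Γ s).inf' (hΓ s) fun γ => ∑ μ, b.1 μ * γ μ) :
    ∃ (n : ℕ) (Bs : Fin n → Set (Belief M)) (δ : Fin n → S → A),
      (∀ b : Belief M, ∃ j, b ∈ Bs j) ∧
      (∀ j, ∃ (k : ℕ) (w : Fin k → M → ℝ) (d : Fin k → ℝ),
        Bs j = {b : Belief M | ∀ i, ∑ μ, b.1 μ * w i μ ≤ d i}) ∧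
      (∀ j s, δ j s ∈ P.act s) ∧
      (∀ j, ∀ b ∈ Bs j, ∀ s,
        vstar s b = ∑ y', P.sig b y' * P.hy y' s (δ j s) fun s' => vstar s' (P.lam y' b)) :=
  belief_space_partition_general P vstar hfix Γ hΓ hpl
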